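/- arXiv:1109.5818 — 4 statements merged into one kernel-verified Lean document; each statement's English description precedes it below -/
import Mathlib

section
/- Let X be a random Hermitian N×N matrix and η > 0. Then every eigenvalue of the matrix -[E((X - iη)^{-1})]^{-1} lies in the half-plane {z : Im z ≥ η}, where E denotes expectation over a probability space on which X is defined (assuming the expectation exists and is invertible). -/
open Matrix MeasureTheory

section
variable {N : ℕ} {Ω : Type*} [MeasureSpace Ω] (P : Measure Ω) [IsProbabilityMeasure P]

lemma herm_im (X : Matrix (Fin N) (Fin N) ℂ) (hX : X.IsHermitian) (w : Fin N → ℂ) :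
    (star w ⬝ᵥ X *ᵥ w).im = 0 := by
  rw [← Complex.conj_eq_iff_im]
  calc (starRingEnd ℂ) (star w ⬝ᵥ X *ᵥ w) = star (star w ⬝ᵥ X *ᵥ w) := rfl
  _ = star (X *ᵥ w) ⬝ᵥ star (star w) := by rw [star_dotProduct]; simp
  _ = (star w ᵥ* Xᴴ) ⬝ᵥ w := by rw [star_mulVec, star_star]
  _ = star w ⬝ᵥ X *ᵥ w := by rw [← dotProduct_mulVec, hX.eq]

lemma star_dot_self (w : Fin N → ℂ) :
    star w ⬝ᵥ w = ((∑ i, Complex.normSq (w i) : ℝ) : ℂ) := by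
  simp [dotProduct, Complex.normSq_eq_conj_mul_self]

lemma key_id (X : Matrix (Fin N) (Fin N) ℂ) (hX : X.IsHermitian) (η : ℝ)
    (w : Fin N → ℂ) :
    (star ((X - (Complex.I * η) • 1) *ᵥ w) ⬝ᵥ w).im = η * ∑ i, Complex.normSq (w i) := by
  set A : Matrix (Fin N) (Fin N) ℂ := X - (Complex.I * η) • 1 with hA
  have hAH : Aᴴ = X + (Complex.I * η) • 1 := by
    rw [hA, conjTranspose_sub, hX.eq, conjTranspose_smul, conjTranspose_one]
    simp [sub_eq_add_neg, Complex.ext_iff]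
  have h1 : star (A *ᵥ w) ⬝ᵥ w = star w ⬝ᵥ (Aᴴ *ᵥ w) := by
    rw [star_mulVec, ← dotProduct_mulVec]
  rw [h1, hAH, add_mulVec, smul_mulVec, one_mulVec, dotProduct_add, dotProduct_smul,
    star_dot_self]
  simp [herm_im X hX w, Complex.mul_im, Complex.mul_re]

lemma det_ne_zero (X : Matrix (Fin N) (Fin N) ℂ) (hX : X.IsHermitian) (η : ℝ)
    (hη : 0 < η) : (X - (Complex.I * η) • 1).det ≠ 0 := by
  intro hdet
  obtain ⟨v, hv0, hv⟩ := (Matrix.exists_mulVec_eq_zero_iff).2 hdet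
  have := key_id X hX η v
  rw [hv] at this
  simp only [star_zero, zero_dotProduct, Complex.zero_im] at this
  have hsum : ∑ i, Complex.normSq (v i) = 0 := by
    rcases mul_eq_zero.1 this.symm with h | h
    · exact absurd h hη.ne'
    · exact h
  apply hv0
  funext i
  have : Complex.normSq (v i) = 0 := by
    have hnn : ∀ j ∈ Finset.univ, 0 ≤ Complex.normSq (v j) := fun j _ => Complex.normSq_nonneg _
    exact (Finset.sum_eq_zero_iff_of_nonneg hnn).1 hsum i (Finset.mem_univ i)
  simpa using Complex.normSq_eq_zero.1 this

lemma eig_bound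
    (X : Ω → Matrix (Fin N) (Fin N) ℂ) (hX : ∀ ω, (X ω).IsHermitian)
    (η : ℝ) (hη : 0 < η)
    (hInt : ∀ i j, Integrable (fun ω => ((X ω - (Complex.I * η) • 1)⁻¹) i j) P)
    (Y : Matrix (Fin N) (Fin N) ℂ)
    (hY : Y = Matrix.of fun i j => ∫ ω, ((X ω - (Complex.I * η) • 1)⁻¹) i j ∂P)
    (lam : ℂ) (v : Fin N → ℂ) (hv0 : v ≠ 0) (hev : Y *ᵥ v = lam • v) :
    η * Complex.normSq lam ≤ lam.im := by
  set w : Ω → Fin N → ℂ := fun ω => ((X ω - (Complex.I * η) • 1)⁻¹) *ᵥ v with hw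
  set nsq : Ω → ℝ := fun ω => ∑ i, Complex.normSq (w ω i) with hnsq
  set V : ℝ := ∑ i, Complex.normSq (v i) with hV
  have hVpos : 0 < V := by
    rcases Function.ne_iff.1 hv0 with ⟨i, hi⟩
    exact Finset.sum_pos' (fun j _ => Complex.normSq_nonneg _)
      ⟨i, Finset.mem_univ i, Complex.normSq_pos.2 hi⟩
  -- A ω is invertible
  have hdet : ∀ ω, IsUnit (X ω - (Complex.I * η) • 1).det :=
    fun ω => isUnit_iff_ne_zero.2 (det_ne_zero (X ω) (hX ω) η hη)
  have hAv : ∀ ω, (X ω - (Complex.I * η) • 1) *ᵥ w ω = v := by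
    intro ω
    rw [hw, Matrix.mulVec_mulVec, Matrix.mul_nonsing_inv _ (hdet ω), Matrix.one_mulVec]
  -- key identity
  have hkey : ∀ ω, (star v ⬝ᵥ w ω).im = η * nsq ω := by
    intro ω
    conv_lhs => rw [← hAv ω]
    exact key_id (X ω) (hX ω) η (w ω)
  -- integrability of entries of w
  have hIntw : ∀ i, Integrable (fun ω => w ω i) P := by
    intro i
    have : (fun ω => w ω i) = fun ω => ∑ j, ((X ω - (Complex.I * η) • 1)⁻¹) i j * v j := by
      funext ω; rfl
    rw [this]
    exact integrable_finset_sum _ (fun j _ => (hInt i j).mul_const _)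
  -- pointwise bound on nsq
  have hbnd : ∀ ω, nsq ω ≤ V / η ^ 2 := by
    intro ω
    have h1 := hkey ω
    have h2 : (star v ⬝ᵥ w ω).im ≤ ∑ i, ‖v i‖ * ‖w ω i‖ := by
      refine le_trans (Complex.im_le_norm _) ?_
      rw [dotProduct]
      refine le_trans (norm_sum_le _ _) (le_of_eq ?_)
      refine Finset.sum_congr rfl fun i _ => ?_
      simp [Pi.star_apply, norm_mul, Complex.norm_conj]
    have h3 : 2 * η * ∑ i, ‖v i‖ * ‖w ω i‖
        ≤ V + η ^ 2 * nsq ω := by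
      rw [hV, hnsq, Finset.mul_sum, Finset.mul_sum, ← Finset.sum_add_distrib]
      refine Finset.sum_le_sum fun i _ => ?_
      have hva : Complex.normSq (v i) = (‖v i‖) ^ 2 := (Complex.sq_norm _).symm
      have hwa : Complex.normSq (w ω i) = (‖w ω i‖) ^ 2 := (Complex.sq_norm _).symm
      rw [hva, hwa]
      nlinarith [sq_nonneg (‖v i‖ - η * ‖w ω i‖)]
    rw [le_div_iff₀ (by positivity : (0:ℝ) < η ^ 2)]
    nlinarith [mul_le_mul_of_nonneg_left h2 (by positivity : (0:ℝ) ≤ 2 * η)]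
  -- integrability of nsq
  have hmeasnsq : AEStronglyMeasurable nsq P := by
    refine Finset.aestronglyMeasurable_fun_sum _ fun i _ => ?_
    exact (Complex.continuous_normSq.comp_aestronglyMeasurable (hIntw i).aestronglyMeasurable)
  have hIntnsq : Integrable nsq P := by
    refine Integrable.mono' (integrable_const (V / η ^ 2)) hmeasnsq ?_
    filter_upwards with ω
    rw [Real.norm_eq_abs, abs_of_nonneg (Finset.sum_nonneg fun i _ => Complex.normSq_nonneg _)]
    exact hbnd ω
  -- entries of Y *ᵥ v
  have hceq : ∀ u : Fin N → ℂ, star u ⬝ᵥ (Y *ᵥ v) = ∫ ω, star u ⬝ᵥ w ω ∂P := by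
    intro u
    have e1 : ∀ i, (Y *ᵥ v) i = ∫ ω, w ω i ∂P := by
      intro i
      show ∑ j, Y i j * v j = _
      have : ∀ j, Y i j * v j = ∫ ω, ((X ω - (Complex.I * η) • 1)⁻¹) i j * v j ∂P := by
        intro j
        rw [hY]
        show (∫ ω, ((X ω - (Complex.I * η) • 1)⁻¹) i j ∂P) * v j = _
        rw [← integral_mul_const]
      simp_rw [this]
      rw [← integral_finset_sum _ (fun j _ => (hInt i j).mul_const _)]
      rfl
    rw [dotProduct]
    simp_rw [e1, Pi.star_apply, ← integral_const_mul]
    rw [← integral_finset_sum _ (fun i _ => ((hIntw i).const_mul _))]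
    rfl
  have hIntdot : ∀ u : Fin N → ℂ, Integrable (fun ω => star u ⬝ᵥ w ω) P := by
    intro u
    have : (fun ω => star u ⬝ᵥ w ω) = fun ω => ∑ i, star (u i) * w ω i := by
      funext ω; rfl
    rw [this]
    exact integrable_finset_sum _ (fun i _ => (hIntw i).const_mul _)
  -- imaginary part identity
  have him : (star v ⬝ᵥ (Y *ᵥ v)).im = η * ∫ ω, nsq ω ∂P := by
    rw [hceq v]
    have h0 := integral_im (𝕜 := ℂ) (hIntdot v)
    simp only [RCLike.im_to_complex] at h0
    rw [← h0]
    simp_rw [hkey]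
    rw [integral_const_mul]
  -- second-moment bound : C ≤ ∫ nsq
  set c : Fin N → ℂ := lam • v with hc
  have hCeq : star c ⬝ᵥ (Y *ᵥ v) = ∫ ω, star c ⬝ᵥ w ω ∂P := hceq c
  set C : ℝ := ∑ i, Complex.normSq (c i) with hC
  have hCre : (star c ⬝ᵥ (Y *ᵥ v)).re = C := by
    rw [hev, star_dot_self c, Complex.ofReal_re]
  have hCle : C ≤ ∫ ω, nsq ω ∂P := by
    have h4 : (∫ ω, star c ⬝ᵥ w ω ∂P).re = ∫ ω, (star c ⬝ᵥ w ω).re ∂P :=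
      by
      have h0 := integral_re (𝕜 := ℂ) (hIntdot c)
      simp only [RCLike.re_to_complex] at h0
      exact h0.symm
    have h5 : ∀ ω, (star c ⬝ᵥ w ω).re ≤ C / 2 + nsq ω / 2 := by
      intro ω
      rw [dotProduct, Complex.re_sum, hC, hnsq, Finset.sum_div, Finset.sum_div,
        ← Finset.sum_add_distrib]
      refine Finset.sum_le_sum fun i _ => ?_
      have h6 : (star c i * w ω i).re ≤ ‖c i‖ * ‖w ω i‖ := by
        refine le_trans (Complex.re_le_norm _) (le_of_eq ?_)
        simp [Pi.star_apply, norm_mul, Complex.norm_conj]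
      have hca : Complex.normSq (c i) = (‖c i‖) ^ 2 := (Complex.sq_norm _).symm
      have hwa : Complex.normSq (w ω i) = (‖w ω i‖) ^ 2 := (Complex.sq_norm _).symm
      rw [hca, hwa]
      nlinarith [sq_nonneg (‖c i‖ - ‖w ω i‖)]
    have h7 : ∫ ω, (star c ⬝ᵥ w ω).re ∂P ≤ ∫ ω, (C / 2 + nsq ω / 2) ∂P := by
      refine integral_mono ((hIntdot c).re) (by
        exact (integrable_const (C/2)).add (hIntnsq.div_const 2)) h5
    have h8 : ∫ ω, (C / 2 + nsq ω / 2) ∂P = C / 2 + (∫ ω, nsq ω ∂P) / 2 := by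
      rw [integral_add (integrable_const _) (hIntnsq.div_const 2), integral_const,
        probReal_univ, one_smul, integral_div]
    have := hCre
    rw [hCeq] at this
    rw [h4] at this
    linarith [h7, h8.symm ▸ h7]
  -- conclude
  have hlamV : lam.im * V = η * ∫ ω, nsq ω ∂P := by
    rw [← him, hev]
    rw [show star v ⬝ᵥ c = lam * (star v ⬝ᵥ v) by rw [hc, dotProduct_smul]; rfl,
      star_dot_self, ← hV]
    simp [Complex.mul_im]
  have hCval : C = Complex.normSq lam * V := by
    rw [hC, hV, Finset.mul_sum]
    refine Finset.sum_congr rfl fun i _ => ?_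
    rw [hc]
    show Complex.normSq (lam * v i) = _
    rw [Complex.normSq_mul]
  have hInsq : 0 ≤ ∫ ω, nsq ω ∂P :=
    integral_nonneg fun ω => Finset.sum_nonneg fun i _ => Complex.normSq_nonneg _
  nlinarith [hCle, hlamV, hCval, hVpos, hη]

end

theorem stmt_7 {N : ℕ} {Ω : Type*} [MeasureSpace Ω] (P : Measure Ω) [IsProbabilityMeasure P]
    (X : Ω → Matrix (Fin N) (Fin N) ℂ) (hX : ∀ ω, (X ω).IsHermitian)
    (η : ℝ) (hη : 0 < η)
    (hInt : ∀ i j, Integrable (fun ω => ((X ω - (Complex.I * η) • 1)⁻¹) i j) P)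
    (Y : Matrix (Fin N) (Fin N) ℂ)
    (hY : Y = Matrix.of fun i j => ∫ ω, ((X ω - (Complex.I * η) • 1)⁻¹) i j ∂P)
    (hYinv : IsUnit Y) :
    ∀ μ ∈ spectrum ℂ (-(Y⁻¹)), η ≤ μ.im := by
  intro μ hμ
  rw [spectrum.mem_iff] at hμ
  rw [Matrix.isUnit_iff_isUnit_det, isUnit_iff_ne_zero, not_not] at hμ
  obtain ⟨v, hv0, hv⟩ := Matrix.exists_mulVec_eq_zero_iff.2 hμ
  have hYdet : IsUnit Y.det := (Matrix.isUnit_iff_isUnit_det Y).1 hYinv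
  -- unpack the eigen relation : Y⁻¹ *ᵥ v = -μ • v
  have hinv : Y⁻¹ *ᵥ v = -μ • v := by
    have : (algebraMap ℂ (Matrix (Fin N) (Fin N) ℂ) μ - -Y⁻¹) *ᵥ v = 0 := hv
    rw [Algebra.algebraMap_eq_smul_one, sub_neg_eq_add, add_mulVec, smul_mulVec,
      one_mulVec] at this
    have h2 : Y⁻¹ *ᵥ v = -(μ • v) := by linear_combination (norm := module) this
    simpa [neg_smul] using h2
  have hμ0 : μ ≠ 0 := by
    intro h0
    rw [h0] at hinv
    simp only [neg_zero, zero_smul] at hinv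
    apply hv0
    have : Y *ᵥ (Y⁻¹ *ᵥ v) = v := by
      rw [Matrix.mulVec_mulVec, Matrix.mul_nonsing_inv _ hYdet, Matrix.one_mulVec]
    rw [hinv, Matrix.mulVec_zero] at this
    exact this.symm
  -- Y *ᵥ v = (-μ)⁻¹ • v
  have hev : Y *ᵥ v = (-μ)⁻¹ • v := by
    have h1 : Y *ᵥ (Y⁻¹ *ᵥ v) = v := by
      rw [Matrix.mulVec_mulVec, Matrix.mul_nonsing_inv _ hYdet, Matrix.one_mulVec]
    rw [hinv, Matrix.mulVec_smul] at h1
    have hμ0' : (-μ) ≠ 0 := neg_ne_zero.2 hμ0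
    calc Y *ᵥ v = (-μ)⁻¹ • ((-μ) • (Y *ᵥ v)) := by rw [smul_smul, inv_mul_cancel₀ hμ0', one_smul]
    _ = (-μ)⁻¹ • v := by rw [h1]
  have hb := eig_bound P X hX η hη hInt Y hY ((-μ)⁻¹) v hv0 hev
  -- translate to μ.im
  have hnormSq : Complex.normSq ((-μ)⁻¹) = (Complex.normSq μ)⁻¹ := by
    rw [map_inv₀, Complex.normSq_neg]
  have him : ((-μ)⁻¹).im = μ.im / Complex.normSq μ := by
    rw [Complex.inv_im, Complex.neg_im, Complex.normSq_neg, neg_neg]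
  rw [hnormSq, him] at hb
  have hnpos : 0 < Complex.normSq μ := Complex.normSq_pos.2 hμ0
  rw [div_eq_mul_inv] at hb
  exact le_of_mul_le_mul_right hb (inv_pos.2 hnpos)
end

section
/- Let A be a diagonal N×N complex matrix, B an arbitrary N×N complex matrix, U a Haar-distributed random unitary matrix, and n ≥ 0 an integer. Then the matrix E[(U B U* A)^n U B U*] is diagonal, i.e., all of its off-diagonal entries vanish. -/
open Matrix MeasureTheory

lemma conj_pow_eq {N : ℕ} (g Y : Matrix (Fin N) (Fin N) ℂ) (hg : g * g = 1) (n : ℕ) :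
    (g * Y * g) ^ n = g * Y ^ n * g := by
  induction n with
  | zero => rw [pow_zero, pow_zero, mul_one, hg]
  | succ k ih =>
    rw [pow_succ, ih, pow_succ]
    calc g * Y ^ k * g * (g * Y * g) = g * Y ^ k * (g * g) * Y * g := by
          noncomm_ring
      _ = g * (Y ^ k * Y) * g := by rw [hg]; noncomm_ring

theorem stmt_10 {N : ℕ} [MeasurableSpace (Matrix.unitaryGroup (Fin N) ℂ)]
    [BorelSpace (Matrix.unitaryGroup (Fin N) ℂ)]
    (μ : Measure (Matrix.unitaryGroup (Fin N) ℂ)) [IsProbabilityMeasure μ]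
    [μ.IsMulLeftInvariant]
    (d : Fin N → ℂ) (B : Matrix (Fin N) (Fin N) ℂ) (n : ℕ) :
    ∀ i j : Fin N, i ≠ j →
      (∫ U : Matrix.unitaryGroup (Fin N) ℂ,
        ((((U : Matrix (Fin N) (Fin N) ℂ) * B * star (U : Matrix (Fin N) (Fin N) ℂ) *
            Matrix.diagonal d) ^ n) *
          ((U : Matrix (Fin N) (Fin N) ℂ) * B * star (U : Matrix (Fin N) (Fin N) ℂ))) i j ∂μ)
        = 0 := by
  intro i j hij
  set v : Fin N → ℂ := fun k => if k = i then -1 else 1 with hv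
  have hv2 : diagonal v * diagonal v = 1 := by
    rw [diagonal_mul_diagonal,
      show (fun k => v k * v k) = (1 : Fin N → ℂ) from
        funext fun k => by by_cases h : k = i <;> simp [hv, h]]
    exact diagonal_one
  have hsv : star (diagonal v) = diagonal v := by
    have hsvf : star v = v := funext fun k => by by_cases h : k = i <;> simp [hv, h]
    rw [star_eq_conjTranspose, diagonal_conjTranspose, hsvf]
  have hmem : diagonal v ∈ Matrix.unitaryGroup (Fin N) ℂ := by
    rw [Matrix.mem_unitaryGroup_iff, hsv, hv2]
  set V : Matrix.unitaryGroup (Fin N) ℂ := ⟨diagonal v, hmem⟩ with hV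
  set f : Matrix.unitaryGroup (Fin N) ℂ → ℂ := fun U =>
      ((((U : Matrix (Fin N) (Fin N) ℂ) * B * star (U : Matrix (Fin N) (Fin N) ℂ) *
            Matrix.diagonal d) ^ n) *
          ((U : Matrix (Fin N) (Fin N) ℂ) * B * star (U : Matrix (Fin N) (Fin N) ℂ))) i j
    with hf
  have key : ∀ U : Matrix.unitaryGroup (Fin N) ℂ, f (V * U) = - f U := by
    intro U
    set X : Matrix (Fin N) (Fin N) ℂ :=
      (U : Matrix (Fin N) (Fin N) ℂ) * B * star (U : Matrix (Fin N) (Fin N) ℂ) with hX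
    have hcoe : ((V * U : Matrix.unitaryGroup (Fin N) ℂ) : Matrix (Fin N) (Fin N) ℂ)
        = diagonal v * (U : Matrix (Fin N) (Fin N) ℂ) := rfl
    have hW : ((V * U : Matrix.unitaryGroup (Fin N) ℂ) : Matrix (Fin N) (Fin N) ℂ) * B *
        star ((V * U : Matrix.unitaryGroup (Fin N) ℂ) : Matrix (Fin N) (Fin N) ℂ)
        = diagonal v * X * diagonal v := by
      rw [hcoe, StarMul.star_mul, hsv, hX]
      noncomm_ring
    have hcomm : diagonal v * diagonal d = diagonal d * diagonal v := by
      simp [diagonal_mul_diagonal, mul_comm]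
    have hM : (diagonal v * X * diagonal v * diagonal d) ^ n * (diagonal v * X * diagonal v)
        = diagonal v * ((X * diagonal d) ^ n * X) * diagonal v := by
      have h1 : diagonal v * X * diagonal v * diagonal d
          = diagonal v * (X * diagonal d) * diagonal v := by
        rw [mul_assoc (diagonal v * X), hcomm]; noncomm_ring
      rw [h1, conj_pow_eq _ _ hv2]
      calc diagonal v * (X * diagonal d) ^ n * diagonal v * (diagonal v * X * diagonal v)
          = diagonal v * (X * diagonal d) ^ n * (diagonal v * diagonal v) * X * diagonal v := by
            noncomm_ring
        _ = _ := by rw [hv2]; noncomm_ring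
    have hentry : ∀ M : Matrix (Fin N) (Fin N) ℂ,
        (diagonal v * M * diagonal v) i j = - M i j := by
      intro M
      rw [Matrix.mul_diagonal, Matrix.diagonal_mul]
      simp [hv, hij, Ne.symm hij]
    simp only [hf, hW, hM]
    rw [hentry]
  have hinv : ∫ U, f (V * U) ∂μ = ∫ U, f U ∂μ :=
    integral_mul_left_eq_self f V
  have : ∫ U, f U ∂μ = - ∫ U, f U ∂μ := by
    calc ∫ U, f U ∂μ = ∫ U, f (V * U) ∂μ := hinv.symm
      _ = ∫ U, - f U ∂μ := by simp only [key]
      _ = - ∫ U, f U ∂μ := integral_neg f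
  have h2 : (2 : ℂ) * ∫ U, f U ∂μ = 0 := by linear_combination this
  have := mul_eq_zero.mp h2
  simpa using this
end

section
/- Let A be an invertible diagonal N×N complex matrix, B an arbitrary N×N matrix, and U a Haar-distributed random unitary matrix. If s ∈ ℂ satisfies |s| · ‖B‖ · ‖A^{-1}‖ < 1, then A + sUBU* is invertible almost surely, and E[(A + sUBU*)^{-1}] is a diagonal matrix. -/
open Matrix MeasureTheory

set_option maxHeartbeats 1600000
set_option synthInstance.maxHeartbeats 1000000

/-- The ℓ² operator norm of a square complex matrix. -/
noncomputable def matOpNorm {N : ℕ} (X : Matrix (Fin N) (Fin N) ℂ) : ℝ :=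
  ‖(Matrix.toEuclideanCLM (𝕜 := ℂ) X : EuclideanSpace ℂ (Fin N) →L[ℂ] EuclideanSpace ℂ (Fin N))‖

lemma clm_unitary_norm_le_one {N : ℕ}
    (u : EuclideanSpace ℂ (Fin N) →L[ℂ] EuclideanSpace ℂ (Fin N)) (h : star u * u = 1) :
    ‖u‖ ≤ 1 := by
  refine ContinuousLinearMap.opNorm_le_bound u zero_le_one (fun x => ?_)
  rw [one_mul]
  have h1 : ContinuousLinearMap.adjoint u (u x) = x := by
    rw [← ContinuousLinearMap.star_eq_adjoint, ← ContinuousLinearMap.comp_apply,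
      ← ContinuousLinearMap.mul_def, h, ContinuousLinearMap.one_apply]
  have h2 : (inner ℂ (u x) (u x) : ℂ) = inner ℂ x x := by
    rw [← ContinuousLinearMap.adjoint_inner_right, h1]
  rw [inner_self_eq_norm_sq_to_K, inner_self_eq_norm_sq_to_K] at h2
  have h4 : ‖u x‖ ^ 2 = ‖x‖ ^ 2 := by exact_mod_cast h2
  nlinarith [norm_nonneg (u x), norm_nonneg x]

lemma aux_isUnit {N : ℕ} (A : Matrix (Fin N) (Fin N) ℂ) (hA : IsUnit A)
    (B : Matrix (Fin N) (Fin N) ℂ) (s : ℂ)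
    (hs : ‖s‖ * matOpNorm B * matOpNorm A⁻¹ < 1)
    (u : Matrix.unitaryGroup (Fin N) ℂ) :
    IsUnit (A + s • ((u : Matrix (Fin N) (Fin N) ℂ) * B *
      star (u : Matrix (Fin N) (Fin N) ℂ))) := by
  set e := Matrix.toEuclideanCLM (𝕜 := ℂ) (n := Fin N) with he
  set M := (u : Matrix (Fin N) (Fin N) ℂ) * B * star (u : Matrix (Fin N) (Fin N) ℂ) with hM
  have hdet : IsUnit A.det := (Matrix.isUnit_iff_isUnit_det A).mp hA
  have hA' : A * A⁻¹ = 1 := Matrix.mul_nonsing_inv A hdet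
  have key : A + s • M = A * (1 + A⁻¹ * (s • M)) := by
    rw [mul_add, mul_one, ← mul_assoc, hA', one_mul]
  rw [key]
  refine hA.mul ?_
  have hu1 : star (u : Matrix (Fin N) (Fin N) ℂ) * u = 1 := u.2.1
  have hnu : ‖e u‖ ≤ 1 := by
    refine clm_unitary_norm_le_one (e u) ?_
    rw [← map_star, ← _root_.map_mul, hu1, _root_.map_one]
  have hu2 : (u : Matrix (Fin N) (Fin N) ℂ) * star (u : Matrix (Fin N) (Fin N) ℂ) = 1 := u.2.2
  have hnu' : ‖star (e u)‖ ≤ 1 := by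
    refine clm_unitary_norm_le_one (star (e u)) ?_
    rw [star_star, ← map_star, ← _root_.map_mul, hu2, _root_.map_one]
  have hnM : ‖e M‖ ≤ matOpNorm B := by
    have hm : e M = e u * e B * star (e u) := by
      rw [hM, _root_.map_mul, _root_.map_mul, map_star]
    rw [hm]
    have t1 : ‖e ↑u * e B * star (e ↑u)‖ ≤ ‖e ↑u * e B‖ * ‖star (e ↑u)‖ := norm_mul_le _ _
    have t2 : ‖e ↑u * e B‖ ≤ ‖e ↑u‖ * ‖e B‖ := norm_mul_le _ _
    have hBe : matOpNorm B = ‖e B‖ := rfl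
    rw [hBe]
    nlinarith [norm_nonneg (e ↑u * e B), norm_nonneg (star (e ↑u)), norm_nonneg (e B),
      norm_nonneg (e ↑u)]
  have hx : ‖e (A⁻¹ * (s • M))‖ < 1 := by
    rw [_root_.map_mul, _root_.map_smul]
    have hB0 : 0 ≤ matOpNorm B := norm_nonneg _
    have hA0 : 0 ≤ ‖e A⁻¹‖ := norm_nonneg _
    have hs0 : 0 ≤ ‖s‖ := norm_nonneg s
    have hAop : ‖e A⁻¹‖ = matOpNorm A⁻¹ := rfl
    calc ‖e A⁻¹ * (s • e M)‖ ≤ ‖e A⁻¹‖ * ‖s • e M‖ := norm_mul_le _ _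
      _ = ‖e A⁻¹‖ * (‖s‖ * ‖e M‖) := by
          have hsm : ‖s • e M‖ = ‖s‖ * ‖e M‖ := by
            rw [show ‖s‖ = ‖s‖ from rfl]
            exact norm_smul s (e M)
          rw [hsm]
      _ ≤ ‖e A⁻¹‖ * (‖s‖ * matOpNorm B) := by gcongr
      _ < 1 := by rw [hAop]; nlinarith
  have hunit : IsUnit (e (1 + A⁻¹ * (s • M))) := by
    rw [_root_.map_add, _root_.map_one]
    exact ⟨Units.oneSub (-(e (A⁻¹ * (s • M)))) (by rwa [norm_neg]),
      by simp [Units.oneSub, sub_neg_eq_add]⟩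
  have := hunit.map e.symm
  simpa using this

theorem stmt_11 {N : ℕ} [MeasurableSpace (Matrix.unitaryGroup (Fin N) ℂ)]
    [BorelSpace (Matrix.unitaryGroup (Fin N) ℂ)]
    (μ : Measure (Matrix.unitaryGroup (Fin N) ℂ)) [IsProbabilityMeasure μ]
    [μ.IsMulLeftInvariant]
    (d : Fin N → ℂ) (A : Matrix (Fin N) (Fin N) ℂ) (hAd : A = Matrix.diagonal d)
    (hA : IsUnit A) (B : Matrix (Fin N) (Fin N) ℂ) (s : ℂ)
    (hs : ‖s‖ * matOpNorm B * matOpNorm A⁻¹ < 1) :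
    (∀ᵐ U : Matrix.unitaryGroup (Fin N) ℂ ∂μ, IsUnit (A + s • ((U : Matrix (Fin N) (Fin N) ℂ) * B *
        star (U : Matrix (Fin N) (Fin N) ℂ)))) ∧
    (∀ i j : Fin N, i ≠ j →
      (∫ U : Matrix.unitaryGroup (Fin N) ℂ,
        ((A + s • ((U : Matrix (Fin N) (Fin N) ℂ) * B *
            star (U : Matrix (Fin N) (Fin N) ℂ)))⁻¹) i j ∂μ) = 0) := by
  refine ⟨ae_of_all _ (fun u => aux_isUnit A hA B s hs u), fun i j hij => ?_⟩
  set f : Matrix.unitaryGroup (Fin N) ℂ → ℂ := fun U =>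
    ((A + s • ((U : Matrix (Fin N) (Fin N) ℂ) * B *
      star (U : Matrix (Fin N) (Fin N) ℂ)))⁻¹) i j with hf
  set ω : Fin N → ℂ := fun k => if k = i then -1 else 1 with hωdef
  have hω : ∀ k, ω k * star (ω k) = 1 := by
    intro k; by_cases h : k = i <;> simp [hωdef, h]
  set D := Matrix.diagonal ω with hD
  have hDsD : D * star D = 1 := by
    rw [hD, star_eq_conjTranspose, diagonal_conjTranspose, diagonal_mul_diagonal]
    have : (fun k => ω k * star ω k) = fun _ => (1 : ℂ) := by
      funext k; simpa using hω k
    rw [this, Matrix.diagonal_one]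
  have hsDD : star D * D = 1 := by
    rw [hD, star_eq_conjTranspose, diagonal_conjTranspose, diagonal_mul_diagonal]
    have : (fun k => star ω k * ω k) = fun _ => (1 : ℂ) := by
      funext k; have := hω k; simpa [mul_comm] using this
    rw [this, Matrix.diagonal_one]
  have hDmem : D ∈ Matrix.unitaryGroup (Fin N) ℂ := by
    rw [Matrix.mem_unitaryGroup_iff]
    exact hDsD
  set g : Matrix.unitaryGroup (Fin N) ℂ := ⟨D, hDmem⟩ with hg
  have hDA : D * A * star D = A := by
    rw [hAd, hD, star_eq_conjTranspose, diagonal_conjTranspose, diagonal_mul_diagonal,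
      diagonal_mul_diagonal]
    refine congrArg Matrix.diagonal (funext fun k => ?_)
    have := hω k
    simp only [Pi.star_apply]
    calc ω k * d k * star (ω k) = d k * (ω k * star (ω k)) := by ring
      _ = d k := by rw [this, mul_one]
  have hDinv : D⁻¹ = star D := Matrix.inv_eq_left_inv hsDD
  have hsDinv : (star D)⁻¹ = D := Matrix.inv_eq_left_inv hDsD
  have hstep : ∀ u : Matrix.unitaryGroup (Fin N) ℂ, f (g * u) = - f u := by
    intro u
    set M := (u : Matrix (Fin N) (Fin N) ℂ) * B * star (u : Matrix (Fin N) (Fin N) ℂ) with hM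
    have hcoe : ((g * u : Matrix.unitaryGroup (Fin N) ℂ) : Matrix (Fin N) (Fin N) ℂ)
        = D * (u : Matrix (Fin N) (Fin N) ℂ) := rfl
    have hMg : ((g * u : Matrix.unitaryGroup (Fin N) ℂ) : Matrix (Fin N) (Fin N) ℂ) * B *
        star ((g * u : Matrix.unitaryGroup (Fin N) ℂ) : Matrix (Fin N) (Fin N) ℂ)
        = D * M * star D := by
      rw [hcoe, Matrix.star_mul, hM]
      simp only [mul_assoc]
    have hX : A + s • (((g * u : Matrix.unitaryGroup (Fin N) ℂ) : Matrix (Fin N) (Fin N) ℂ) * B *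
        star ((g * u : Matrix.unitaryGroup (Fin N) ℂ) : Matrix (Fin N) (Fin N) ℂ))
        = D * (A + s • M) * star D := by
      rw [hMg, mul_add, add_mul, mul_smul_comm, smul_mul_assoc, hDA]
    have hinv : (D * (A + s • M) * star D)⁻¹ = D * ((A + s • M)⁻¹ * star D) := by
      rw [Matrix.mul_inv_rev, Matrix.mul_inv_rev, hDinv, hsDinv]
    have hfg : f (g * u) = (D * ((A + s • M)⁻¹ * star D)) i j := by
      show ((A + s • (((g * u : Matrix.unitaryGroup (Fin N) ℂ) : Matrix (Fin N) (Fin N) ℂ) * B *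
        star ((g * u : Matrix.unitaryGroup (Fin N) ℂ) : Matrix (Fin N) (Fin N) ℂ)))⁻¹) i j = _
      rw [hX, hinv]
    rw [hfg, hD, star_eq_conjTranspose, diagonal_conjTranspose, Matrix.diagonal_mul,
      Matrix.mul_diagonal]
    have hωi : ω i = -1 := by simp [hωdef]
    have hωj : star ω j = 1 := by
      have : ω j = 1 := by simp [hωdef, hij.symm]
      simp [this]
    rw [hωi, hωj, mul_one, neg_one_mul]
  have h1 : ∫ u, f (g * u) ∂μ = ∫ u, f u ∂μ := integral_mul_left_eq_self f g
  have h2 : ∫ u, f (g * u) ∂μ = - ∫ u, f u ∂μ := by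
    simp_rw [hstep]
    exact integral_neg f
  rw [h2] at h1
  have : (2 : ℂ) * ∫ u, f u ∂μ = 0 := by linear_combination - h1
  simpa using this
end

section
/- Let μ₁ and μ₂ be probability measures on ℝ with Stieltjes transforms m₁, m₂, and suppose the Lévy distance satisfies d_L(μ₁, μ₂) ≤ s. Then for z = E + iη with η > 0, |m₁(z) - m₂(z)| ≤ c·s·η^{-1}·max{1, η^{-1}} for some absolute constant c > 0. -/
open MeasureTheory ProbabilityTheory Set

lemma aux_ne (E : ℝ) {η : ℝ} (hη : 0 < η) (x : ℝ) :
    ((x : ℂ) - ((E : ℂ) + η * Complex.I)) ≠ 0 := by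
  intro h
  have : ((x : ℂ) - ((E : ℂ) + η * Complex.I)).im = 0 := by rw [h]; simp
  simp [Complex.sub_im, Complex.add_im] at this
  linarith

lemma aux_norm (E : ℝ) {η : ℝ} (hη : 0 < η) (x : ℝ) :
    ‖(((x : ℂ) - ((E : ℂ) + η * Complex.I)) ^ 2)⁻¹‖ = (((x - E) ^ 2 + η ^ 2))⁻¹ := by
  rw [norm_inv, norm_pow, Complex.sq_norm]
  congr 1
  simp [Complex.normSq_apply, Complex.sub_re, Complex.sub_im]
  ring

lemma aux_w_int (E : ℝ) {η : ℝ} (hη : 0 < η) :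
    Integrable (fun x : ℝ => ((x - E) ^ 2 + η ^ 2)⁻¹) := by
  have h1 : Integrable (fun t : ℝ => (1 + (t / η) ^ 2)⁻¹) :=
    integrable_inv_one_add_sq.comp_div hη.ne'
  have h2 : Integrable (fun t : ℝ => η⁻¹ ^ 2 * (1 + (t / η) ^ 2)⁻¹) := h1.const_mul _
  have h3 := h2.comp_sub_right E
  refine h3.congr (Filter.Eventually.of_forall fun x => ?_)
  have : (x - E) ^ 2 + η ^ 2 = η ^ 2 * (1 + ((x - E) / η) ^ 2) := by
    field_simp; ring
  simp only []
  rw [this]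
  field_simp

lemma aux_w_integral (E : ℝ) {η : ℝ} (hη : 0 < η) :
    ∫ x : ℝ, ((x - E) ^ 2 + η ^ 2)⁻¹ = Real.pi / η := by
  have h0 : ∀ x : ℝ, ((x - E) ^ 2 + η ^ 2)⁻¹ = η⁻¹ ^ 2 * (1 + ((x - E) / η) ^ 2)⁻¹ := by
    intro x
    have : (x - E) ^ 2 + η ^ 2 = η ^ 2 * (1 + ((x - E) / η) ^ 2) := by field_simp; ring
    rw [this]; field_simp
  simp_rw [h0]
  rw [integral_sub_right_eq_self (μ := volume) (fun t => η⁻¹ ^ 2 * (1 + (t / η) ^ 2)⁻¹) E,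
    integral_const_mul, MeasureTheory.Measure.integral_comp_div (fun t => (1 + t ^ 2)⁻¹) η,
    integral_univ_inv_one_add_sq]
  rw [abs_of_pos hη, smul_eq_mul]
  field_simp

lemma aux_cont (E : ℝ) {η : ℝ} (hη : 0 < η) :
    Continuous (fun x : ℝ => (((x : ℂ) - ((E : ℂ) + η * Complex.I)) ^ 2)⁻¹) := by
  refine Continuous.inv₀ (by continuity) (fun x => pow_ne_zero _ (aux_ne E hη x))

lemma aux_int2 (E : ℝ) {η : ℝ} (hη : 0 < η) :
    Integrable (fun x : ℝ => (((x : ℂ) - ((E : ℂ) + η * Complex.I)) ^ 2)⁻¹) := by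
  refine (aux_w_int E hη).mono' ((aux_cont E hη).aestronglyMeasurable) ?_
  exact Filter.Eventually.of_forall fun x => le_of_eq (aux_norm E hη x)

lemma aux_A (E : ℝ) {η : ℝ} (hη : 0 < η) (l : ℝ) :
    ((l : ℂ) - ((E : ℂ) + η * Complex.I))⁻¹ =
      ∫ x in Set.Ioi l, (((x : ℂ) - ((E : ℂ) + η * Complex.I)) ^ 2)⁻¹ := by
  set z : ℂ := (E : ℂ) + η * Complex.I with hzdef
  have hderiv : ∀ x ∈ Set.Ici l, HasDerivAt (fun x : ℝ => ((x : ℂ) - z)⁻¹)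
      (-(((x : ℂ) - z) ^ 2)⁻¹) x := by
    intro x _
    have h1 : HasDerivAt (fun w : ℂ => (w - z)) 1 ((x : ℝ) : ℂ) :=
      (hasDerivAt_id _).sub_const z
    have h2 := h1.inv (aux_ne E hη x)
    have h3 := h2.comp_ofReal
    simpa [div_eq_mul_inv] using h3
  have htt : Filter.Tendsto (fun x : ℝ => ((x : ℂ) - z)⁻¹) Filter.atTop (nhds 0) := by
    rw [tendsto_zero_iff_norm_tendsto_zero]
    have h2 : Filter.Tendsto (fun x : ℝ => ‖(x : ℂ) - z‖) Filter.atTop Filter.atTop := by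
      refine Filter.tendsto_atTop_mono (fun x => ?_) (Filter.tendsto_atTop_add_const_right _ (-‖z‖) Filter.tendsto_id)
      have := norm_sub_norm_le ((x : ℂ)) z
      simp only [Complex.norm_real, Real.norm_eq_abs] at this
      have := le_abs_self x
      simp only [id]
      linarith
    simp only [norm_inv]; exact h2.inv_tendsto_atTop
  have key := integral_Ioi_of_hasDerivAt_of_tendsto
    ((hderiv l Set.self_mem_Ici).continuousAt.continuousWithinAt)
    (fun x hx => hderiv x (Set.mem_of_mem_of_subset hx Set.Ioi_subset_Ici_self))
    ((aux_int2 E hη).neg.integrableOn) htt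
  rw [integral_neg] at key
  have : ∫ x in Set.Ioi l, (((x : ℂ) - z) ^ 2)⁻¹ = ((l:ℂ) - z)⁻¹ := by
    have := neg_eq_iff_eq_neg.mp key
    rw [this]; ring
  rw [this]

lemma aux_repr (E : ℝ) {η : ℝ} (hη : 0 < η) (μ : Measure ℝ) [IsProbabilityMeasure μ] :
    ∫ l : ℝ, ((l : ℂ) - ((E : ℂ) + η * Complex.I))⁻¹ ∂μ
      = ∫ x : ℝ, (((x : ℂ) - ((E : ℂ) + η * Complex.I)) ^ 2)⁻¹ * ((μ (Set.Iio x)).toReal : ℂ) := by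
  set z : ℂ := (E : ℂ) + η * Complex.I with hzdef
  set g : ℝ → ℂ := fun x => (((x : ℂ) - z) ^ 2)⁻¹ with hgdef
  set f : ℝ → ℝ → ℂ := fun l x => Set.indicator (Set.Ioi l) g x with hfdef
  have hg_int : Integrable g := aux_int2 E hη
  have huncurry : Function.uncurry f =
      Set.indicator {p : ℝ × ℝ | p.1 < p.2} (fun p => g p.2) := by
    funext p
    by_cases h : p.1 < p.2 <;>
      simp [Function.uncurry, hfdef, Set.indicator_apply, Set.mem_Ioi, h]
  have hsm : AEStronglyMeasurable (Function.uncurry f) (μ.prod volume) := by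
    rw [huncurry]
    exact (((aux_cont E hη).comp continuous_snd).stronglyMeasurable.indicator
      (measurableSet_lt measurable_fst measurable_snd)).aestronglyMeasurable
  have hInt : Integrable (Function.uncurry f) (μ.prod volume) := by
    rw [MeasureTheory.integrable_prod_iff hsm]
    constructor
    · exact Filter.Eventually.of_forall fun l => hg_int.indicator measurableSet_Ioi
    · have hnormeq : ∀ l : ℝ, (∫ x : ℝ, ‖f l x‖) = ∫ x in Set.Ioi l, ‖g x‖ := by
        intro l
        rw [← MeasureTheory.integral_indicator measurableSet_Ioi]
        congr 1
        funext x
        exact norm_indicator_eq_indicator_norm g x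
      have hanti : Antitone (fun l : ℝ => ∫ x in Set.Ioi l, ‖g x‖) := by
        intro a b hab
        refine MeasureTheory.setIntegral_mono_set hg_int.norm.integrableOn
          (Filter.Eventually.of_forall fun x => norm_nonneg _)
          (Filter.Eventually.of_forall ?_)
        exact fun x hx => lt_of_le_of_lt hab hx
      refine (MeasureTheory.integrable_const (∫ x : ℝ, ‖g x‖)).mono' ?_ ?_
      · refine AEStronglyMeasurable.congr (hanti.measurable).aestronglyMeasurable ?_
        refine Filter.Eventually.of_forall fun l => ?_
        simp only [Function.uncurry_apply_pair]
        exact (hnormeq l).symm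
      · refine Filter.Eventually.of_forall fun l => ?_
        simp only [Function.uncurry_apply_pair]
        rw [hnormeq l, Real.norm_eq_abs,
          abs_of_nonneg (MeasureTheory.setIntegral_nonneg measurableSet_Ioi
            fun x _ => norm_nonneg _)]
        exact MeasureTheory.setIntegral_le_integral hg_int.norm
          (Filter.Eventually.of_forall fun x => norm_nonneg _)
  have step1 : ∫ l : ℝ, ((l : ℂ) - z)⁻¹ ∂μ = ∫ l : ℝ, (∫ x : ℝ, f l x) ∂μ := by
    congr 1
    funext l
    rw [aux_A E hη l, ← MeasureTheory.integral_indicator measurableSet_Ioi]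
  rw [step1, MeasureTheory.integral_integral_swap hInt]
  congr 1
  funext x
  have hswap : ∀ l : ℝ, f l x = Set.indicator (Set.Iio x) (fun _ => g x) l := by
    intro l
    by_cases h : l < x <;>
      simp [hfdef, Set.indicator_apply, Set.mem_Ioi, Set.mem_Iio, h]
  simp_rw [hswap]
  rw [MeasureTheory.integral_indicator_const (g x) measurableSet_Iio]
  rw [Complex.real_smul, mul_comm]
  rfl

lemma aux_meas_Ioc {s : ℝ} (hs : 0 ≤ s) (μ : Measure ℝ) [IsProbabilityMeasure μ] :
    Measurable (fun x : ℝ => μ (Set.Ioc (x - s) (x + s))) := by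
  have h1 : Measurable (fun x : ℝ => μ (Set.Iic (x + s))) :=
    Monotone.measurable (fun a b hab => measure_mono (Set.Iic_subset_Iic.mpr (by linarith)))
  have h2 : Measurable (fun x : ℝ => μ (Set.Iic (x - s))) :=
    Monotone.measurable (fun a b hab => measure_mono (Set.Iic_subset_Iic.mpr (by linarith)))
  have heq : ∀ x : ℝ, μ (Set.Ioc (x - s) (x + s)) = μ (Set.Iic (x + s)) - μ (Set.Iic (x - s)) := by
    intro x
    rw [← (show Set.Iic (x + s) \ Set.Iic (x - s) = Set.Ioc (x - s) (x + s) by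
      ext y; simp only [Set.mem_diff, Set.mem_Iic, Set.mem_Ioc, not_le]; exact and_comm), measure_diff (Set.Iic_subset_Iic.mpr (by linarith))
      measurableSet_Iic.nullMeasurableSet (measure_ne_top μ _)]
  simp only [heq]; exact h1.sub h2

lemma aux_B (E : ℝ) {η : ℝ} (hη : 0 < η) {s : ℝ} (hs : 0 ≤ s)
    (μ : Measure ℝ) [IsProbabilityMeasure μ] :
    ∫ x : ℝ, ((x - E) ^ 2 + η ^ 2)⁻¹ * (μ (Set.Ioc (x - s) (x + s))).toReal
      ≤ 2 * s * (η ^ 2)⁻¹ := by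
  set w : ℝ → ℝ := fun x => ((x - E) ^ 2 + η ^ 2)⁻¹ with hwdef
  have hw_nonneg : ∀ x, 0 ≤ w x := fun x => by positivity
  have hw_le : ∀ x, w x ≤ (η ^ 2)⁻¹ := by
    intro x
    refine inv_anti₀ (by positivity) (by nlinarith [sq_nonneg (x - E)])
  have hwc : Continuous w := by
    refine Continuous.inv₀ (by continuity) (fun x => by positivity)
  have hgm : Measurable (fun x : ℝ => (μ (Set.Ioc (x - s) (x + s))).toReal) :=
    (aux_meas_Ioc hs μ).ennreal_toReal
  have h_nonneg : ∀ x : ℝ, 0 ≤ w x * (μ (Set.Ioc (x - s) (x + s))).toReal :=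
    fun x => mul_nonneg (hw_nonneg x) ENNReal.toReal_nonneg
  rw [MeasureTheory.integral_eq_lintegral_of_nonneg_ae
    (Filter.Eventually.of_forall h_nonneg)
    ((hwc.measurable.mul hgm).aestronglyMeasurable)]
  have key : (∫⁻ x : ℝ, ENNReal.ofReal (w x * (μ (Set.Ioc (x - s) (x + s))).toReal))
      ≤ ENNReal.ofReal (2 * s * (η ^ 2)⁻¹) := by
    have step1 : ∀ x : ℝ, ENNReal.ofReal (w x * (μ (Set.Ioc (x - s) (x + s))).toReal)
        = ∫⁻ l : ℝ, Set.indicator (Set.Ioc (x - s) (x + s))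
            (fun _ => ENNReal.ofReal (w x)) l ∂μ := by
      intro x
      rw [MeasureTheory.lintegral_indicator_const measurableSet_Ioc,
        ENNReal.ofReal_mul (hw_nonneg x), ENNReal.ofReal_toReal (measure_ne_top μ _)]
    simp_rw [step1]
    have hswap : (∫⁻ x : ℝ, ∫⁻ l : ℝ, Set.indicator (Set.Ioc (x - s) (x + s))
          (fun _ => ENNReal.ofReal (w x)) l ∂μ)
        = ∫⁻ l : ℝ, ∫⁻ x : ℝ, Set.indicator (Set.Ioc (x - s) (x + s))
          (fun _ => ENNReal.ofReal (w x)) l ∂(volume : Measure ℝ) ∂μ := by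
      rw [MeasureTheory.lintegral_lintegral_swap]
      have : Measurable (Function.uncurry fun (x l : ℝ) =>
          Set.indicator (Set.Ioc (x - s) (x + s)) (fun _ => ENNReal.ofReal (w x)) l) := by
        have hset : MeasurableSet {p : ℝ × ℝ | p.1 - s < p.2 ∧ p.2 ≤ p.1 + s} := by
          refine MeasurableSet.inter ?_ ?_
          · exact measurableSet_lt (measurable_fst.sub measurable_const) measurable_snd
          · exact measurableSet_le measurable_snd (measurable_fst.add measurable_const)
        have : (Function.uncurry fun (x l : ℝ) =>
            Set.indicator (Set.Ioc (x - s) (x + s)) (fun _ => ENNReal.ofReal (w x)) l)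
            = Set.indicator {p : ℝ × ℝ | p.1 - s < p.2 ∧ p.2 ≤ p.1 + s}
              (fun p => ENNReal.ofReal (w p.1)) := by
          funext p
          by_cases h : p.1 - s < p.2 ∧ p.2 ≤ p.1 + s <;>
            simp [Function.uncurry, Set.indicator_apply, Set.mem_Ioc, h]
        rw [this]
        exact ((ENNReal.measurable_ofReal.comp (hwc.measurable.comp measurable_fst))).indicator hset
      exact this.aemeasurable
    rw [hswap]
    have inner_le : ∀ l : ℝ, (∫⁻ x : ℝ, Set.indicator (Set.Ioc (x - s) (x + s))
        (fun _ => ENNReal.ofReal (w x)) l ∂(volume : Measure ℝ))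
        ≤ ENNReal.ofReal (2 * s * (η ^ 2)⁻¹) := by
      intro l
      have hind : ∀ x : ℝ, Set.indicator (Set.Ioc (x - s) (x + s))
          (fun _ => ENNReal.ofReal (w x)) l
          = Set.indicator (Set.Ico (l - s) (l + s)) (fun x => ENNReal.ofReal (w x)) x := by
        intro x
        have hmem : l ∈ Set.Ioc (x - s) (x + s) ↔ x ∈ Set.Ico (l - s) (l + s) := by
          simp only [Set.mem_Ioc, Set.mem_Ico]
          constructor <;> (rintro ⟨h1, h2⟩; constructor <;> linarith)
        simp only [Set.indicator_apply]
        exact if_congr hmem rfl rfl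
      simp_rw [hind]
      rw [MeasureTheory.lintegral_indicator measurableSet_Ico]
      calc ∫⁻ x in Set.Ico (l - s) (l + s), ENNReal.ofReal (w x)
          ≤ ∫⁻ _ in Set.Ico (l - s) (l + s), ENNReal.ofReal ((η ^ 2)⁻¹) := by
            exact MeasureTheory.lintegral_mono fun x => ENNReal.ofReal_le_ofReal (hw_le x)
        _ = ENNReal.ofReal ((η ^ 2)⁻¹) * volume (Set.Ico (l - s) (l + s)) := by
            rw [MeasureTheory.lintegral_const, Measure.restrict_apply MeasurableSet.univ,
              Set.univ_inter]
        _ ≤ ENNReal.ofReal (2 * s * (η ^ 2)⁻¹) := by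
            rw [Real.volume_Ico]
            have : l + s - (l - s) = 2 * s := by ring
            rw [this, ← ENNReal.ofReal_mul (by positivity)]
            exact ENNReal.ofReal_le_ofReal (le_of_eq (by ring))
    calc (∫⁻ l : ℝ, ∫⁻ x : ℝ, Set.indicator (Set.Ioc (x - s) (x + s))
          (fun _ => ENNReal.ofReal (w x)) l ∂(volume : Measure ℝ) ∂μ)
        ≤ ∫⁻ _ : ℝ, ENNReal.ofReal (2 * s * (η ^ 2)⁻¹) ∂μ :=
          MeasureTheory.lintegral_mono inner_le
      _ = ENNReal.ofReal (2 * s * (η ^ 2)⁻¹) := by simp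
  exact ENNReal.toReal_le_of_le_ofReal (by positivity) key

lemma aux_Iio_toReal (μ : Measure ℝ) [IsProbabilityMeasure μ] {x : ℝ} (hx : μ {x} = 0) :
    (μ (Set.Iio x)).toReal = cdf μ x := by
  rw [cdf_eq_real, measureReal_def]
  congr 1
  have : Set.Iic x = Set.Iio x ∪ {x} := by
    rw [Set.union_singleton, Set.Iio_insert]
  have h2 := measure_union (μ := μ) (s₁ := Set.Iio x) (s₂ := {x})
    (Set.disjoint_singleton_right.mpr (lt_irrefl x)) (measurableSet_singleton x)
  rw [this, h2, hx, add_zero]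

lemma aux_Ioc_toReal (μ : Measure ℝ) [IsProbabilityMeasure μ] {x s : ℝ} (hs : 0 ≤ s) :
    (μ (Set.Ioc (x - s) (x + s))).toReal = cdf μ (x + s) - cdf μ (x - s) := by
  have hle : x - s ≤ x + s := by linarith
  have : μ (Set.Iic (x + s)) = μ (Set.Iic (x - s)) + μ (Set.Ioc (x - s) (x + s)) := by
    rw [← measure_union (Set.Iic_disjoint_Ioc le_rfl) measurableSet_Ioc,
      Set.Iic_union_Ioc_eq_Iic hle]
  rw [cdf_eq_real, cdf_eq_real, measureReal_def, measureReal_def, this,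
    ENNReal.toReal_add (measure_ne_top μ _) (measure_ne_top μ _)]
  ring

lemma aux_pointwise (μ₁ μ₂ : Measure ℝ) [IsProbabilityMeasure μ₁] [IsProbabilityMeasure μ₂]
    {s : ℝ} (hs : 0 ≤ s)
    (hL : ∀ x : ℝ, cdf μ₂ (x - s) - s ≤ cdf μ₁ x ∧ cdf μ₁ x ≤ cdf μ₂ (x + s) + s)
    {x : ℝ} (h1 : μ₁ {x} = 0) (h2 : μ₂ {x} = 0) :
    |(μ₁ (Set.Iio x)).toReal - (μ₂ (Set.Iio x)).toReal|
      ≤ s + (μ₂ (Set.Ioc (x - s) (x + s))).toReal := by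
  rw [aux_Iio_toReal μ₁ h1, aux_Iio_toReal μ₂ h2, aux_Ioc_toReal μ₂ hs]
  obtain ⟨hlow, hup⟩ := hL x
  have hm1 : cdf μ₂ (x - s) ≤ cdf μ₂ x := monotone_cdf (μ := μ₂) (by linarith)
  have hm2 : cdf μ₂ x ≤ cdf μ₂ (x + s) := monotone_cdf (μ := μ₂) (by linarith)
  rw [abs_le]
  constructor <;> linarith

lemma aux_atoms (μ : Measure ℝ) [IsProbabilityMeasure μ] :
    ∀ᵐ x : ℝ, μ {x} = 0 := by
  have hc : Set.Countable {x : ℝ | 0 < μ {x}} :=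
    Measure.countable_meas_pos_of_disjoint_iUnion (μ := μ) (As := fun t : ℝ => {t})
      (fun t => measurableSet_singleton t)
      (fun a b hab => Set.disjoint_singleton.mpr hab)
  rw [MeasureTheory.ae_iff]
  refine measure_mono_null ?_ (hc.measure_zero volume)
  intro x hx
  simp only [Set.mem_setOf_eq] at hx ⊢
  exact pos_iff_ne_zero.mpr hx

theorem stmt_17 :
    ∃ c : ℝ, 0 < c ∧
      ∀ (μ₁ μ₂ : Measure ℝ), IsProbabilityMeasure μ₁ → IsProbabilityMeasure μ₂ →
        ∀ s : ℝ, 0 ≤ s →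
          (∀ x : ℝ, cdf μ₂ (x - s) - s ≤ cdf μ₁ x ∧ cdf μ₁ x ≤ cdf μ₂ (x + s) + s) →
          ∀ E η : ℝ, 0 < η →
            ‖((∫ l : ℝ, ((l : ℂ) - ((E : ℂ) + η * Complex.I))⁻¹ ∂μ₁) -
                ∫ l : ℝ, ((l : ℂ) - ((E : ℂ) + η * Complex.I))⁻¹ ∂μ₂)‖ ≤
              c * s * η⁻¹ * max 1 η⁻¹ := by
  refine ⟨6, by norm_num, ?_⟩
  intro μ₁ μ₂ h₁ h₂ s hs hL E η hη
  have hm : ∀ (μ : Measure ℝ), Measurable fun x : ℝ => (μ (Set.Iio x)).toReal := fun μ =>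
    (Monotone.measurable fun a b hab => measure_mono (Set.Iio_subset_Iio hab)).ennreal_toReal
  have hint : ∀ (μ : Measure ℝ), IsProbabilityMeasure μ → Integrable
      (fun x : ℝ => (((x : ℂ) - ((E : ℂ) + η * Complex.I)) ^ 2)⁻¹ * ((μ (Set.Iio x)).toReal : ℂ)) := by
    intro μ hμ
    refine (aux_w_int E hη).mono' ?_ ?_
    · exact (aux_cont E hη).aestronglyMeasurable.mul
        ((Complex.measurable_ofReal.comp (hm μ)).aestronglyMeasurable)
    · refine Filter.Eventually.of_forall fun x => ?_
      rw [norm_mul, aux_norm E hη x, Complex.norm_real, Real.norm_eq_abs,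
        abs_of_nonneg ENNReal.toReal_nonneg]
      have hr : (μ (Set.Iio x)).toReal ≤ 1 := by
        simpa using ENNReal.toReal_mono ENNReal.one_ne_top prob_le_one
      exact mul_le_of_le_one_right (by positivity) hr
  rw [aux_repr E hη μ₁, aux_repr E hη μ₂, ← MeasureTheory.integral_sub (hint μ₁ h₁) (hint μ₂ h₂)]
  set g₂ : ℝ → ℝ := fun x => (μ₂ (Set.Ioc (x - s) (x + s))).toReal with hg₂def
  have hg₂m : Measurable g₂ := (aux_meas_Ioc hs μ₂).ennreal_toReal
  have hg₂nonneg : ∀ x, 0 ≤ g₂ x := fun x => ENNReal.toReal_nonneg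
  have hg₂le1 : ∀ x, g₂ x ≤ 1 := fun x => by
    simpa using ENNReal.toReal_mono ENNReal.one_ne_top prob_le_one
  set w : ℝ → ℝ := fun x => ((x - E) ^ 2 + η ^ 2)⁻¹ with hwdef
  have hwnonneg : ∀ x, 0 ≤ w x := fun x => by positivity
  have hRhsInt : Integrable (fun x : ℝ => w x * (s + g₂ x)) := by
    refine ((aux_w_int E hη).const_mul (s + 1)).mono' ?_ ?_
    · exact ((aux_w_int E hη).aestronglyMeasurable.mul
        ((measurable_const.add hg₂m).aestronglyMeasurable))
    · refine Filter.Eventually.of_forall fun x => ?_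
      rw [Real.norm_eq_abs, abs_of_nonneg (mul_nonneg (hwnonneg x) (by positivity))]
      have := hg₂le1 x
      have := hg₂nonneg x
      have := hwnonneg x
      nlinarith
  calc ‖∫ x : ℝ, ((((x : ℂ) - ((E : ℂ) + η * Complex.I)) ^ 2)⁻¹ * ((μ₁ (Set.Iio x)).toReal : ℂ)
          - (((x : ℂ) - ((E : ℂ) + η * Complex.I)) ^ 2)⁻¹ * ((μ₂ (Set.Iio x)).toReal : ℂ))‖
      ≤ ∫ x : ℝ, ‖(((x : ℂ) - ((E : ℂ) + η * Complex.I)) ^ 2)⁻¹ * ((μ₁ (Set.Iio x)).toReal : ℂ)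
          - (((x : ℂ) - ((E : ℂ) + η * Complex.I)) ^ 2)⁻¹ * ((μ₂ (Set.Iio x)).toReal : ℂ)‖ :=
        MeasureTheory.norm_integral_le_integral_norm _
    _ ≤ ∫ x : ℝ, w x * (s + g₂ x) := by
        refine MeasureTheory.integral_mono_of_nonneg
          (Filter.Eventually.of_forall fun x => norm_nonneg _) hRhsInt ?_
        filter_upwards [aux_atoms μ₁, aux_atoms μ₂] with x hx1 hx2
        rw [← mul_sub, norm_mul, aux_norm E hη x]
        have : ((μ₁ (Set.Iio x)).toReal : ℂ) - ((μ₂ (Set.Iio x)).toReal : ℂ)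
            = (((μ₁ (Set.Iio x)).toReal - (μ₂ (Set.Iio x)).toReal : ℝ) : ℂ) := by push_cast; ring
        rw [this, Complex.norm_real, Real.norm_eq_abs]
        exact mul_le_mul_of_nonneg_left (aux_pointwise μ₁ μ₂ hs hL hx1 hx2) (hwnonneg x)
    _ = (∫ x : ℝ, w x) * s + ∫ x : ℝ, w x * g₂ x := by
        have hint1 : Integrable (fun x : ℝ => w x * s) := (aux_w_int E hη).mul_const s
        have hint2 : Integrable (fun x : ℝ => w x * g₂ x) := by
          refine (aux_w_int E hη).mono' ((aux_w_int E hη).aestronglyMeasurable.mul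
            hg₂m.aestronglyMeasurable) ?_
          refine Filter.Eventually.of_forall fun x => ?_
          rw [Real.norm_eq_abs, abs_of_nonneg (mul_nonneg (hwnonneg x) (hg₂nonneg x))]
          exact mul_le_of_le_one_right (hwnonneg x) (hg₂le1 x)
        simp_rw [mul_add]
        rw [MeasureTheory.integral_add hint1 hint2, MeasureTheory.integral_mul_const]
    _ ≤ (Real.pi / η) * s + 2 * s * (η ^ 2)⁻¹ := by
        rw [aux_w_integral E hη]
        exact add_le_add_right (aux_B E hη hs μ₂) _
    _ ≤ 6 * s * η⁻¹ * max 1 η⁻¹ := by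
        have hM1 : (1 : ℝ) ≤ max 1 η⁻¹ := le_max_left _ _
        have hM2 : η⁻¹ ≤ max 1 η⁻¹ := le_max_right _ _
        have hπ : Real.pi ≤ 4 := by linarith [Real.pi_le_four]
        have hηinv : 0 < η⁻¹ := inv_pos.mpr hη
        have hdiv : Real.pi / η = Real.pi * η⁻¹ := div_eq_mul_inv _ _
        have hsq : (η ^ 2)⁻¹ = η⁻¹ * η⁻¹ := by
          rw [sq]; exact mul_inv η η
        rw [hdiv, hsq]
        have hsb : 0 ≤ s * η⁻¹ := mul_nonneg hs hηinv.le
        nlinarith [mul_nonneg hsb (sub_nonneg.mpr hM1), mul_nonneg hsb (sub_nonneg.mpr hM2),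
          mul_nonneg hsb (sub_nonneg.mpr hπ), Real.pi_pos]
end
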